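/- arXiv:2112.00906 — 5 statements merged into one kernel-verified Lean document; each statement's English description precedes it below -/
import Mathlib

section
/- Let m ≥ 2 be an integer and let α : I → ℝ be a positive function on an open interval I with α' > 0, satisfying the ODE α·(α')^{-(2m-2)/(2m-1)}·α'' = (2m-1)·((α')^{2m/(2m-1)} + 1). Then there exists a constant c₁ such that for all u ∈ I, 2 log α(u) = (1/m) log((α'(u))^{2m/(2m-1)} + 1) + c₁; equivalently, α^{2m} = C·((α')^{2m/(2m-1)} + 1) for some constant C > 0. -/
/-- First integral of the rotational minimal surface equation (4.1). -/
theorem minimal_ode_first_integral (m : ℕ) (hm : 2 ≤ m) (I : Set ℝ)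
    (hI : IsOpen I) (hI' : IsPreconnected I)
    (α α' α'' : ℝ → ℝ)
    (hd1 : ∀ u ∈ I, HasDerivAt α (α' u) u)
    (hd2 : ∀ u ∈ I, HasDerivAt α' (α'' u) u)
    (hpos : ∀ u ∈ I, 0 < α u) (hpos' : ∀ u ∈ I, 0 < α' u)
    (hode : ∀ u ∈ I, α u * (α' u) ^ (-(2 * (m : ℝ) - 2) / (2 * m - 1)) * α'' u
      = (2 * (m : ℝ) - 1) * ((α' u) ^ (2 * (m : ℝ) / (2 * m - 1)) + 1)) :
    (∃ c₁ : ℝ, ∀ u ∈ I,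
      2 * Real.log (α u)
        = (1 / (m : ℝ)) * Real.log ((α' u) ^ (2 * (m : ℝ) / (2 * m - 1)) + 1) + c₁) ∧
    (∃ C > 0, ∀ u ∈ I,
      (α u) ^ (2 * m) = C * ((α' u) ^ (2 * (m : ℝ) / (2 * m - 1)) + 1)) := by
  have hM : (2:ℝ) ≤ (m:ℝ) := by exact_mod_cast hm
  have hm0 : (m:ℝ) ≠ 0 := by positivity
  have hD : (2 * (m:ℝ) - 1) ≠ 0 := by nlinarith
  set p : ℝ := 2 * (m:ℝ) / (2 * m - 1) with hp
  set q : ℝ := (2 * (m:ℝ) - 2) / (2 * m - 1) with hq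
  set g : ℝ → ℝ := fun u =>
    2 * Real.log (α u) - (1 / (m:ℝ)) * Real.log ((α' u) ^ p + 1) with hg
  -- the derivative of g vanishes on I
  have hder : ∀ u ∈ I, HasDerivAt g 0 u := by
    intro u hu
    have ha : 0 < α u := hpos u hu
    have hb : 0 < α' u := hpos' u hu
    have hS : 0 < (α' u) ^ p + 1 := by positivity
    have h1 : HasDerivAt (fun u => Real.log (α u)) (α' u / α u) u :=
      (hd1 u hu).log ha.ne'
    have h2 : HasDerivAt (fun u => (α' u) ^ p + 1)
        (α'' u * p * (α' u) ^ (p - 1)) u :=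
      ((hd2 u hu).rpow_const (Or.inl hb.ne')).add_const 1
    have h3 : HasDerivAt (fun u => Real.log ((α' u) ^ p + 1))
        ((α'' u * p * (α' u) ^ (p - 1)) / ((α' u) ^ p + 1)) u :=
      h2.log hS.ne'
    have h4 : HasDerivAt g
        (2 * (α' u / α u)
          - (1 / (m:ℝ)) * ((α'' u * p * (α' u) ^ (p - 1)) / ((α' u) ^ p + 1))) u :=
      (h1.const_mul 2).sub (h3.const_mul (1 / (m:ℝ)))
    -- compute that the derivative is zero using the ODE
    have hXY : (α' u) ^ q * (α' u) ^ (p - 1) = α' u := by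
      rw [← Real.rpow_add hb]
      have : q + (p - 1) = 1 := by
        rw [hp, hq]; field_simp; ring
      rw [this, Real.rpow_one]
    have hXne : (α' u) ^ q ≠ 0 := (Real.rpow_pos_of_pos hb q).ne'
    have hode' : α u * ((α' u) ^ q)⁻¹ * α'' u
        = (2 * (m:ℝ) - 1) * ((α' u) ^ p + 1) := by
      have := hode u hu
      rwa [show -(2 * (m : ℝ) - 2) / (2 * m - 1) = -q by rw [hq]; ring,
        Real.rpow_neg hb.le] at this
    have hc : α'' u = (2 * (m:ℝ) - 1) * ((α' u) ^ p + 1) * (α' u) ^ q / α u := by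
      field_simp at hode' ⊢
      nlinarith [hode']
    have hpD : p * (2 * (m:ℝ) - 1) = 2 * m := by
      rw [hp]; field_simp
    have hzero : 2 * (α' u / α u)
        - (1 / (m:ℝ)) * ((α'' u * p * (α' u) ^ (p - 1)) / ((α' u) ^ p + 1)) = 0 := by
      rw [hc]
      set X := (α' u) ^ q with hX
      set Y := (α' u) ^ (p - 1) with hY
      clear_value p q X Y
      field_simp
      linear_combination (-(2 * (m:ℝ) - 1) * p) * hXY
        + (-(α' u)) * hpD
    rwa [hzero] at h4
  -- g is constant on I
  have hconv : Convex ℝ I := hI'.convex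
  have hconst : ∀ x ∈ I, ∀ y ∈ I, g x = g y := by
    intro x hx y hy
    refine hconv.is_const_of_fderivWithin_eq_zero
      (fun z hz => ((hder z hz).differentiableAt).differentiableWithinAt) ?_ hx hy
    intro z hz
    rw [fderivWithin_of_isOpen hI hz, (hder z hz).hasFDerivAt.fderiv]
    ext
    simp
  rcases Set.eq_empty_or_nonempty I with hIe | ⟨u₀, hu₀⟩
  · exact ⟨⟨0, fun u hu => by simp [hIe] at hu⟩,
      ⟨1, one_pos, fun u hu => by simp [hIe] at hu⟩⟩
  · set c₁ : ℝ := g u₀ with hc₁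
    have key : ∀ u ∈ I, 2 * Real.log (α u)
        = (1 / (m:ℝ)) * Real.log ((α' u) ^ p + 1) + c₁ := by
      intro u hu
      have := hconst u hu u₀ hu₀
      simp only [hg] at this ⊢
      linarith [this]
    refine ⟨⟨c₁, key⟩, ⟨Real.exp ((m:ℝ) * c₁), Real.exp_pos _, ?_⟩⟩
    intro u hu
    have ha : 0 < α u := hpos u hu
    have hb : 0 < α' u := hpos' u hu
    have hS : 0 < (α' u) ^ p + 1 := by positivity
    have h1 : (α u) ^ (2 * m) = Real.exp (Real.log (α u) * (2 * m : ℕ)) := by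
      rw [← Real.rpow_natCast (α u) (2 * m), Real.rpow_def_of_pos ha]
    rw [h1]
    have h2 : Real.log (α u) * ((2 * m : ℕ) : ℝ)
        = Real.log ((α' u) ^ p + 1) + (m:ℝ) * c₁ := by
      have hk := key u hu
      push_cast
      field_simp at hk
      nlinarith [hk]
    rw [h2, Real.exp_add, Real.exp_log hS]
    ring
end

section
/- Let m ≥ 2 be an integer, c₂ > 0, c₃ ∈ ℝ, and define u₊(α) = ∫_{c₂}^α c₂^{2m-1}/(ρ^{2m} - c₂^{2m})^{(2m-1)/(2m)} dρ + c₃ for α > c₂. Then u₊ is strictly increasing on (c₂, ∞), lim_{α→c₂⁺} u₊(α) = c₃, lim_{α→∞} u₊(α) = c₃ + d₁ for some finite d₁ > 0, and lim_{α→c₂⁺} u₊'(α) = +∞. -/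
open Filter Set MeasureTheory

/-- Behavior of the generalized catenoid profile function u₊. -/
theorem generalized_catenoid_profile (m : ℕ) (hm : 2 ≤ m) (c₂ c₃ : ℝ) (hc : 0 < c₂)
    (u : ℝ → ℝ)
    (hu : ∀ α : ℝ, u α = (∫ ρ in c₂..α,
      c₂ ^ (2 * m - 1) / (ρ ^ (2 * m) - c₂ ^ (2 * m)) ^ ((2 * (m : ℝ) - 1) / (2 * m))) + c₃) :
    StrictMonoOn u (Ioi c₂) ∧
    Tendsto u (nhdsWithin c₂ (Ioi c₂)) (nhds c₃) ∧
    (∃ d₁ > 0, Tendsto u atTop (nhds (c₃ + d₁))) ∧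
    Tendsto (deriv u) (nhdsWithin c₂ (Ioi c₂)) atTop := by
  have hm2 : (2:ℝ) ≤ (m:ℝ) := by exact_mod_cast hm
  set p : ℝ := (2 * (m : ℝ) - 1) / (2 * m) with hpdef
  set f : ℝ → ℝ := fun ρ => c₂ ^ (2 * m - 1) / (ρ ^ (2 * m) - c₂ ^ (2 * m)) ^ p with hfdef
  have h2m : (0:ℝ) < 2 * m := by linarith
  have hp0 : 0 < p := div_pos (by linarith) h2m
  have hp1 : p < 1 := (div_lt_one h2m).2 (by linarith)
  have hA : 0 < c₂ ^ (2 * m - 1) := pow_pos hc _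
  have hu' : ∀ α, u α = (∫ ρ in c₂..α, f ρ) + c₃ := hu
  -- positivity of the base
  have hbase : ∀ ρ, c₂ < ρ → 0 < ρ ^ (2 * m) - c₂ ^ (2 * m) := by
    intro ρ hρ
    have := pow_lt_pow_left₀ hρ hc.le (by omega : 2 * m ≠ 0)
    linarith
  have hfpos : ∀ ρ, c₂ < ρ → 0 < f ρ := fun ρ hρ =>
    div_pos hA (Real.rpow_pos_of_pos (hbase ρ hρ) p)
  have hmeas : Measurable f :=
    measurable_const.div ((Real.continuous_rpow_const hp0.le).measurable.comp
      (((continuous_pow (2*m)).sub continuous_const).measurable))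
  -- key lower bound near c₂
  have key : ∀ ρ, c₂ < ρ → c₂ ^ (2 * m - 1) * (ρ - c₂) ≤ ρ ^ (2 * m) - c₂ ^ (2 * m) := by
    intro ρ hρ
    have e1 : ρ ^ (2 * m) = ρ ^ (2 * m - 1) * ρ := by rw [← pow_succ]; congr 1; omega
    have e2 : c₂ ^ (2 * m) = c₂ ^ (2 * m - 1) * c₂ := by rw [← pow_succ]; congr 1; omega
    rw [e1, e2]
    nlinarith [pow_le_pow_left₀ hc.le hρ.le (2*m-1), pow_pos hc (2*m-1)]
  set C1 : ℝ := c₂ ^ (2 * m - 1) / (c₂ ^ (2 * m - 1) : ℝ) ^ p with hC1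
  have hbound1 : ∀ ρ, c₂ < ρ → f ρ ≤ C1 * (ρ - c₂) ^ (-p) := by
    intro ρ hρ
    have hs : (0:ℝ) < ρ - c₂ := by linarith
    have h1 : (c₂ ^ (2*m-1) * (ρ - c₂)) ^ p ≤ (ρ ^ (2*m) - c₂ ^ (2*m)) ^ p :=
      Real.rpow_le_rpow (by positivity) (key ρ hρ) hp0.le
    have h2 : (c₂ ^ (2*m-1) * (ρ - c₂) : ℝ) ^ p
        = (c₂ ^ (2*m-1) : ℝ) ^ p * (ρ - c₂) ^ p := Real.mul_rpow hA.le hs.le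
    have h3 : f ρ ≤ c₂ ^ (2*m-1) / ((c₂ ^ (2*m-1) : ℝ) ^ p * (ρ - c₂) ^ p) := by
      apply div_le_div_of_nonneg_left hA.le (by positivity)
      rw [← h2]; exact h1
    calc f ρ ≤ c₂ ^ (2*m-1) / ((c₂ ^ (2*m-1) : ℝ) ^ p * (ρ - c₂) ^ p) := h3
      _ = C1 * (ρ - c₂) ^ (-p) := by
          rw [Real.rpow_neg hs.le, hC1, inv_eq_one_div, div_mul_div_comm, mul_one]
  -- interval integrability from c₂
  have hfi : ∀ b, c₂ ≤ b → IntervalIntegrable f volume c₂ b := by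
    intro b hb
    have hg0 : IntervalIntegrable (fun x : ℝ => x ^ (-p)) volume 0 (b - c₂) :=
      intervalIntegral.intervalIntegrable_rpow' (by linarith)
    have hg1 : IntervalIntegrable (fun x : ℝ => (x - c₂) ^ (-p)) volume c₂ b := by
      have h := hg0.comp_sub_right c₂
      have e0 : (0:ℝ) + c₂ = c₂ := by ring
      have eb : b - c₂ + c₂ = b := by ring
      rwa [e0, eb] at h
    have hg : IntervalIntegrable (fun x : ℝ => C1 * (x - c₂) ^ (-p)) volume c₂ b :=
      hg1.const_mul C1
    rw [intervalIntegrable_iff_integrableOn_Ioc_of_le hb] at hg ⊢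
    refine hg.mono' hmeas.aestronglyMeasurable ?_
    filter_upwards [ae_restrict_mem measurableSet_Ioc] with ρ hρ
    rw [Real.norm_eq_abs, abs_of_pos (hfpos ρ hρ.1)]
    exact hbound1 ρ hρ.1
  -- tail integrability
  have htail : IntegrableOn f (Ioi (2 * c₂)) volume := by
    set q : ℝ := 2 * (m:ℝ) - 1 with hq
    have hnp : (2 * m : ℝ) * p = q := by
      rw [hpdef, hq]; field_simp
    have hbound2 : ∀ ρ, 2 * c₂ < ρ → f ρ ≤ (c₂ ^ (2*m-1) * 2 ^ p) * ρ ^ (-q) := by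
      intro ρ hρ
      have hρ0 : (0:ℝ) < ρ := by linarith
      have h2n : (2:ℝ) ≤ 2 ^ (2 * m) := by
        calc (2:ℝ) = 2 ^ 1 := (pow_one 2).symm
        _ ≤ 2 ^ (2 * m) := pow_le_pow_right₀ one_le_two (by omega)
      have hcn : c₂ ^ (2*m) ≤ ρ ^ (2*m) / 2 := by
        have h4 : (2 * c₂) ^ (2*m) ≤ ρ ^ (2*m) := pow_le_pow_left₀ (by positivity) hρ.le _
        rw [mul_pow] at h4
        have hc2 : (0:ℝ) < c₂ ^ (2*m) := pow_pos hc _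
        nlinarith
      have hD : ρ ^ (2*m) / 2 ≤ ρ ^ (2*m) - c₂ ^ (2*m) := by linarith
      have hDp : (ρ ^ (2*m) / 2 : ℝ) ^ p ≤ (ρ ^ (2*m) - c₂ ^ (2*m)) ^ p :=
        Real.rpow_le_rpow (by positivity) hD hp0.le
      have hval : (ρ ^ (2*m) / 2 : ℝ) ^ p = ρ ^ ((2*m:ℝ) * p) / 2 ^ p := by
        rw [Real.div_rpow (by positivity) (by norm_num), ← Real.rpow_natCast ρ (2*m),
          ← Real.rpow_mul hρ0.le]
        push_cast
        ring_nf
      have hfρ : f ρ ≤ c₂ ^ (2*m-1) / (ρ ^ ((2*m:ℝ) * p) / 2 ^ p) := by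
        apply div_le_div_of_nonneg_left hA.le
        · rw [hnp]; positivity
        · rw [← hval]; exact hDp
      calc f ρ ≤ c₂ ^ (2*m-1) / (ρ ^ ((2*m:ℝ) * p) / 2 ^ p) := hfρ
        _ = (c₂ ^ (2*m-1) * 2 ^ p) * ρ ^ (-q) := by
            rw [hnp, Real.rpow_neg hρ0.le]
            field_simp
    have hgint : IntegrableOn (fun ρ : ℝ => (c₂ ^ (2*m-1) * 2 ^ p) * ρ ^ (-q))
        (Ioi (2 * c₂)) volume :=
      (integrableOn_Ioi_rpow_of_lt (by rw [hq]; linarith) (by linarith)).const_mul _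
    refine hgint.mono' hmeas.aestronglyMeasurable ?_
    filter_upwards [ae_restrict_mem measurableSet_Ioi] with ρ hρ
    rw [Real.norm_eq_abs, abs_of_pos (hfpos ρ (by simp only [mem_Ioi] at hρ; linarith))]
    exact hbound2 ρ hρ
  have hIoi : IntegrableOn f (Ioi c₂) volume := by
    rw [← Ioc_union_Ioi_eq_Ioi (by linarith : c₂ ≤ 2 * c₂)]
    exact ((intervalIntegrable_iff_integrableOn_Ioc_of_le (by linarith)).1
      (hfi (2*c₂) (by linarith))).union htail
  -- derivative formula
  have hderiv : ∀ α, c₂ < α → HasDerivAt u (f α) α := by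
    intro α hα
    have hcont : ContinuousAt f α := by
      apply ContinuousAt.div continuousAt_const
      · exact (((continuous_id.pow (2*m)).sub continuous_const).continuousAt).rpow_const
          (Or.inl (hbase α hα).ne')
      · exact (Real.rpow_pos_of_pos (hbase α hα) p).ne'
    have h1 : HasDerivAt (fun x => ∫ t in c₂..x, f t) (f α) α :=
      intervalIntegral.integral_hasDerivAt_right (hfi α hα.le)
        (hmeas.stronglyMeasurable.stronglyMeasurableAtFilter) hcont
    have : u = fun x => (∫ t in c₂..x, f t) + c₃ := funext hu'
    rw [this]
    exact h1.add_const c₃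
  refine ⟨?_, ?_, ?_, ?_⟩
  · -- strict mono
    intro a ha b hb hab
    rw [hu' a, hu' b]
    have hia : IntervalIntegrable f volume c₂ a := hfi a (le_of_lt ha)
    have hiab : IntervalIntegrable f volume a b := by
      apply (hfi b (le_of_lt hb)).mono_set
      rw [uIcc_of_le hab.le, uIcc_of_le (le_of_lt hb)]
      exact Icc_subset_Icc (le_of_lt ha) le_rfl
    have hsplit : (∫ ρ in c₂..a, f ρ) + (∫ ρ in a..b, f ρ) = ∫ ρ in c₂..b, f ρ :=
      intervalIntegral.integral_add_adjacent_intervals hia hiab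
    have hpos : 0 < ∫ ρ in a..b, f ρ :=
      intervalIntegral.intervalIntegral_pos_of_pos_on hiab
        (fun x hx => hfpos x (lt_trans ha hx.1)) hab
    linarith
  · -- limit at c₂ from the right
    have hicc : IntegrableOn f (Icc c₂ (c₂ + 1)) volume := by
      rw [integrableOn_Icc_iff_integrableOn_Ioc]
      exact (intervalIntegrable_iff_integrableOn_Ioc_of_le (by linarith)).1
        (hfi (c₂+1) (by linarith))
    have hcontF := intervalIntegral.continuousOn_primitive hicc
    have hF : ContinuousWithinAt (fun x => ∫ t in Ioc c₂ x, f t) (Icc c₂ (c₂+1)) c₂ :=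
      hcontF.continuousWithinAt ⟨le_rfl, by linarith⟩
    have h0 : (∫ t in Ioc c₂ c₂, f t) = 0 := by simp
    have hF2 : Tendsto (fun x => ∫ t in Ioc c₂ x, f t) (nhdsWithin c₂ (Ioc c₂ (c₂+1)))
        (nhds 0) := by
      rw [← h0]
      exact hF.mono_left (nhdsWithin_mono _ Ioc_subset_Icc_self)
    rw [nhdsWithin_Ioc_eq_nhdsGT (by linarith : c₂ < c₂ + 1)] at hF2
    have : Tendsto u (nhdsWithin c₂ (Ioi c₂)) (nhds (0 + c₃)) := by
      apply Tendsto.congr' _ (hF2.add_const c₃)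
      filter_upwards [self_mem_nhdsWithin] with α hα
      rw [hu' α, intervalIntegral.integral_of_le (le_of_lt hα)]
    simpa using this
  · -- limit at infinity
    refine ⟨∫ x in Ioi c₂, f x, ?_, ?_⟩
    · have hnn : 0 ≤ᵐ[volume.restrict (Ioi c₂)] f := by
        filter_upwards [ae_restrict_mem measurableSet_Ioi] with x hx using (hfpos x hx).le
      show (0:ℝ) < ∫ x in Ioi c₂, f x
      rw [setIntegral_pos_iff_support_of_nonneg_ae hnn hIoi]
      · have hsub : Ioi c₂ ⊆ Function.support f ∩ Ioi c₂ :=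
          fun x hx => ⟨(hfpos x hx).ne', hx⟩
        refine lt_of_lt_of_le ?_ (measure_mono hsub)
        rw [Real.volume_Ioi]
        exact ENNReal.zero_lt_top
    · have h1 : Tendsto (fun b => ∫ ρ in c₂..b, f ρ) atTop (nhds (∫ x in Ioi c₂, f x)) :=
        MeasureTheory.intervalIntegral_tendsto_integral_Ioi c₂ hIoi tendsto_id
      have h2 := h1.add_const c₃
      rw [add_comm] at h2
      exact h2.congr (fun b => (hu' b).symm)
  · -- derivative blows up
    have hg0 : Tendsto (fun α => (α ^ (2*m) - c₂ ^ (2*m) : ℝ) ^ p)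
        (nhdsWithin c₂ (Ioi c₂)) (nhdsWithin 0 (Ioi 0)) := by
      rw [tendsto_nhdsWithin_iff]
      constructor
      · have hcont0 : ContinuousAt (fun α : ℝ => (α ^ (2*m) - c₂ ^ (2*m) : ℝ) ^ p) c₂ :=
          (((continuous_id.pow (2*m)).sub continuous_const).continuousAt).rpow_const
            (Or.inr hp0.le)
        have := hcont0.continuousWithinAt (s := Ioi c₂)
        have hval : ((c₂:ℝ) ^ (2*m) - c₂ ^ (2*m) : ℝ) ^ p = 0 := by
          rw [sub_self, Real.zero_rpow hp0.ne']
        rw [ContinuousWithinAt, hval] at this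
        exact this
      · filter_upwards [self_mem_nhdsWithin] with α hα
        exact Real.rpow_pos_of_pos (hbase α hα) p
    have hinv : Tendsto (fun α => ((α ^ (2*m) - c₂ ^ (2*m) : ℝ) ^ p)⁻¹)
        (nhdsWithin c₂ (Ioi c₂)) atTop := hg0.inv_tendsto_nhdsGT_zero
    have hftop : Tendsto f (nhdsWithin c₂ (Ioi c₂)) atTop := by
      have := hinv.const_mul_atTop hA
      refine this.congr (fun α => ?_)
      rw [hfdef]
      simp [div_eq_mul_inv]
    apply hftop.congr' ?_ |>.mono_left le_rfl
    · filter_upwards [self_mem_nhdsWithin] with α hα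
      exact ((hderiv α hα).deriv).symm
end

section
/- Let m ≥ 2 be an integer. The improper integral ∫_0^1 (1 - ρ²)^{(2m-1)/2} / (1 - (1 - ρ²)^m)^{(2m-1)/(2m)} dρ diverges to +∞ at the lower endpoint ρ = 0; that is, lim_{ε→0⁺} ∫_ε^1 (1 - ρ²)^{(2m-1)/2} / (1 - (1 - ρ²)^m)^{(2m-1)/(2m)} dρ = +∞. -/
open Filter

/-- The generalized pseudo-sphere (K = -1, c₁ = 1) has unbounded height:
the integral diverges at ρ = 0. -/
theorem pseudosphere_integral_diverges (m : ℕ) (hm : 2 ≤ m) :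
    Tendsto (fun ε : ℝ => ∫ ρ in ε..1,
        (1 - ρ ^ 2) ^ ((2 * (m : ℝ) - 1) / 2) /
          (1 - (1 - ρ ^ 2) ^ m) ^ ((2 * (m : ℝ) - 1) / (2 * m)))
      (nhdsWithin 0 (Set.Ioi 0)) atTop := by
  have hm0 : m ≠ 0 := by omega
  have hmR : (2:ℝ) ≤ m := by exact_mod_cast hm
  have hmpos : (0:ℝ) < m := by linarith
  set p : ℝ := (2 * (m : ℝ) - 1) / 2 with hpdef
  set q : ℝ := (2 * (m : ℝ) - 1) / (2 * m) with hqdef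
  set f : ℝ → ℝ := fun ρ => (1 - ρ ^ 2) ^ p / (1 - (1 - ρ ^ 2) ^ m) ^ q with hfdef
  have hp0 : 0 ≤ p := by
    apply div_nonneg <;> linarith
  have hq0 : 0 ≤ q := by
    apply div_nonneg <;> linarith
  have hq1 : 1 ≤ 2 * q := by
    have h : (1/2 : ℝ) ≤ (2 * (m:ℝ) - 1) / (2 * m) := by
      rw [le_div_iff₀ (by linarith : (0:ℝ) < 2 * m)]
      linarith
    rw [hqdef]; linarith
  -- continuity of numerator and denominator
  have hnum_cont : Continuous fun x : ℝ => (1 - x ^ 2) ^ p := by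
    rw [continuous_iff_continuousAt]
    intro x
    exact (Real.continuousAt_rpow_const _ _ (Or.inr hp0)).comp
      ((continuous_const.sub (continuous_pow 2)).continuousAt)
  have hden_cont : Continuous fun x : ℝ => (1 - (1 - x ^ 2) ^ m) ^ q := by
    rw [continuous_iff_continuousAt]
    intro x
    exact (Real.continuousAt_rpow_const _ _ (Or.inr hq0)).comp
      ((continuous_const.sub ((continuous_const.sub (continuous_pow 2)).pow m)).continuousAt)
  have hden_pos : ∀ x : ℝ, 0 < x → x ≤ 1 → 0 < 1 - (1 - x ^ 2) ^ m := by
    intro x hx hx1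
    have h1 : (1 - x ^ 2) ^ m < 1 := by
      apply pow_lt_one₀ (by nlinarith) (by nlinarith) hm0
    linarith
  have hfc : ∀ x ∈ Set.Ioc (0:ℝ) 1, ContinuousAt f x := by
    intro x hx
    exact ContinuousAt.div hnum_cont.continuousAt hden_cont.continuousAt
      (Real.rpow_pos_of_pos (hden_pos x hx.1 hx.2) q).ne'
  have hint : ∀ a b : ℝ, 0 < a → a ≤ b → b ≤ 1 →
      IntervalIntegrable f MeasureTheory.volume a b := by
    intro a b ha hab hb1
    apply ContinuousOn.intervalIntegrable
    apply continuousOn_of_forall_continuousAt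
    intro x hx
    rw [Set.uIcc_of_le hab] at hx
    exact hfc x ⟨lt_of_lt_of_le ha hx.1, le_trans hx.2 hb1⟩
  set c : ℝ := (3/4 : ℝ) ^ p / (m : ℝ) ^ q with hcdef
  have hc : 0 < c :=
    div_pos (Real.rpow_pos_of_pos (by norm_num) _) (Real.rpow_pos_of_pos hmpos _)
  -- key pointwise bound
  have key : ∀ x : ℝ, 0 < x → x ≤ 1/2 → c * x⁻¹ ≤ f x := by
    intro x hx hx2
    have hxsq : x ^ 2 ≤ 1/4 := by nlinarith
    have hnum : (3/4 : ℝ) ^ p ≤ (1 - x ^ 2) ^ p :=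
      Real.rpow_le_rpow (by norm_num) (by linarith) hp0
    have hdpos : 0 < 1 - (1 - x ^ 2) ^ m := hden_pos x hx (by linarith)
    have hbern : 1 - (m : ℝ) * x ^ 2 ≤ (1 - x ^ 2) ^ m := by
      have h := one_add_mul_le_pow (show (-2:ℝ) ≤ -x^2 by nlinarith) m
      have h2 : (1 + -x^2 : ℝ) = 1 - x^2 := by ring
      rw [h2] at h
      linarith
    have hd_le : (1 - (1 - x ^ 2) ^ m) ^ q ≤ ((m:ℝ) * x ^ 2) ^ q :=
      Real.rpow_le_rpow hdpos.le (by linarith) hq0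
    have hsplit : ((m:ℝ) * x ^ 2) ^ q = (m:ℝ) ^ q * (x ^ 2) ^ q :=
      Real.mul_rpow hmpos.le (sq_nonneg x)
    have hx2q : ((x : ℝ) ^ 2) ^ q ≤ x := by
      have h1 : ((x : ℝ) ^ 2) ^ q = x ^ (2 * q) := by
        rw [← Real.rpow_natCast x 2, ← Real.rpow_mul hx.le]
        norm_num
      rw [h1]
      calc x ^ (2*q) ≤ x ^ (1:ℝ) :=
            Real.rpow_le_rpow_of_exponent_ge hx (by linarith) hq1
        _ = x := Real.rpow_one x
    have hd_le' : (1 - (1 - x ^ 2) ^ m) ^ q ≤ (m:ℝ) ^ q * x := by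
      calc (1 - (1 - x ^ 2) ^ m) ^ q ≤ ((m:ℝ)*x^2)^q := hd_le
        _ = (m:ℝ)^q * (x^2)^q := hsplit
        _ ≤ (m:ℝ)^q * x :=
            mul_le_mul_of_nonneg_left hx2q (Real.rpow_nonneg hmpos.le q)
    have hdq : 0 < (1 - (1 - x ^ 2) ^ m) ^ q := Real.rpow_pos_of_pos hdpos q
    have hfinal : (3/4:ℝ)^p / ((m:ℝ)^q * x) ≤ f x :=
      div_le_div₀ (Real.rpow_nonneg (by nlinarith) p) hnum hdq hd_le'
    calc c * x⁻¹ = (3/4:ℝ)^p / ((m:ℝ)^q * x) := by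
          rw [hcdef, ← div_eq_mul_inv, div_div]
      _ ≤ f x := hfinal
  set K : ℝ := ∫ ρ in (1/2:ℝ)..1, f ρ with hKdef
  have hbound : ∀ ε : ℝ, 0 < ε → ε < 1/2 →
      c * Real.log ((1/2) / ε) + K ≤ ∫ ρ in ε..1, f ρ := by
    intro ε hε hε2
    have hi1 : IntervalIntegrable f MeasureTheory.volume ε (1/2) :=
      hint ε (1/2) hε hε2.le (by norm_num)
    have hi2 : IntervalIntegrable f MeasureTheory.volume (1/2) 1 :=
      hint (1/2) 1 (by norm_num) (by norm_num) le_rfl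
    have hsplit : ∫ ρ in ε..1, f ρ = (∫ ρ in ε..(1/2:ℝ), f ρ) + K := by
      rw [hKdef]
      exact (intervalIntegral.integral_add_adjacent_intervals hi1 hi2).symm
    rw [hsplit]
    have hginteg : IntervalIntegrable (fun x : ℝ => c * x⁻¹) MeasureTheory.volume ε (1/2) := by
      apply ContinuousOn.intervalIntegrable
      apply ContinuousOn.mul continuousOn_const
      apply ContinuousOn.inv₀ continuousOn_id
      intro x hx
      rw [Set.uIcc_of_le hε2.le] at hx
      exact ne_of_gt (lt_of_lt_of_le hε hx.1)
    have hmono : ∫ x in ε..(1/2:ℝ), c * x⁻¹ ≤ ∫ ρ in ε..(1/2:ℝ), f ρ := by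
      apply intervalIntegral.integral_mono_on hε2.le hginteg hi1
      intro x hx
      exact key x (lt_of_lt_of_le hε hx.1) hx.2
    have hzero : (0:ℝ) ∉ Set.uIcc ε (1/2) := by
      rw [Set.uIcc_of_le hε2.le]
      intro h
      exact absurd h.1 (not_le.mpr hε)
    have hcalc : ∫ x in ε..(1/2:ℝ), c * x⁻¹ = c * Real.log ((1/2)/ε) := by
      rw [intervalIntegral.integral_const_mul, integral_inv hzero]
    linarith
  have hlim : Tendsto (fun ε : ℝ => c * Real.log ((1/2)/ε) + K)
      (nhdsWithin 0 (Set.Ioi 0)) atTop := by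
    apply tendsto_atTop_add_const_right
    apply Tendsto.const_mul_atTop hc
    apply Real.tendsto_log_atTop.comp
    have h := tendsto_inv_nhdsGT_zero.const_mul_atTop (by norm_num : (0:ℝ) < 1/2)
    convert h using 1
    funext x
    simp [div_eq_mul_inv]
  refine tendsto_atTop_mono' _ ?_ hlim
  filter_upwards [Ioo_mem_nhdsGT_of_mem
    (by norm_num : (0:ℝ) ∈ Set.Ico 0 (1/2))] with ε hε
  exact hbound ε hε.1 hε.2
end

section
/- Let m ≥ 2 be an integer and H ≠ 0 a real constant. Suppose α : I → ℝ is positive with α' > 0 and satisfies (1/(2m-1))·α·((α')^{2m/(2m-1)} + 1)^{-(2m+1)/(2m)}·(α')^{-(2m-2)/(2m-1)}·α'' - ((α')^{2m/(2m-1)} + 1)^{-1/(2m)} = 2Hα on an open interval I. Then there exists a constant c₁ such that α(u)·((α'(u))^{2m/(2m-1)} + 1)^{-1/(2m)} = c₁ - H·α(u)² for all u ∈ I. -/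
/-- First integral of the constant Minkowski mean curvature equation (6.1). -/
theorem constant_mean_curvature_first_integral (m : ℕ) (hm : 2 ≤ m) (H : ℝ) (hH : H ≠ 0)
    (I : Set ℝ) (hI : IsOpen I) (hI' : IsPreconnected I)
    (α α' α'' : ℝ → ℝ)
    (hd1 : ∀ u ∈ I, HasDerivAt α (α' u) u)
    (hd2 : ∀ u ∈ I, HasDerivAt α' (α'' u) u)
    (hpos : ∀ u ∈ I, 0 < α u) (hpos' : ∀ u ∈ I, 0 < α' u)
    (hode : ∀ u ∈ I, (1 / (2 * (m : ℝ) - 1)) * α u *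
        ((α' u) ^ (2 * (m : ℝ) / (2 * m - 1)) + 1) ^ (-(2 * (m : ℝ) + 1) / (2 * m)) *
        (α' u) ^ (-(2 * (m : ℝ) - 2) / (2 * m - 1)) * α'' u
      - ((α' u) ^ (2 * (m : ℝ) / (2 * m - 1)) + 1) ^ (-(1 : ℝ) / (2 * m))
      = 2 * H * α u) :
    ∃ c₁ : ℝ, ∀ u ∈ I,
      α u * ((α' u) ^ (2 * (m : ℝ) / (2 * m - 1)) + 1) ^ (-(1 : ℝ) / (2 * m))
        = c₁ - H * (α u) ^ 2 := by
  rcases I.eq_empty_or_nonempty with rfl | ⟨u₀, hu₀⟩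
  · exact ⟨0, by simp⟩
  have hM : (2 : ℝ) ≤ (m : ℝ) := by exact_mod_cast hm
  have h2M : (2 * (m : ℝ)) ≠ 0 := by positivity
  have h2M1 : (2 * (m : ℝ) - 1) ≠ 0 := by nlinarith
  set M : ℝ := (m : ℝ) with hMdef
  set p : ℝ := 2 * M / (2 * M - 1) with hp
  set q : ℝ := -(1 : ℝ) / (2 * M) with hq
  set F : ℝ → ℝ := fun u => α u * ((α' u) ^ p + 1) ^ q + H * α u ^ 2 with hF
  have hFd : ∀ u ∈ I, HasDerivAt F 0 u := by
    intro u hu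
    have ha' : 0 < α' u := hpos' u hu
    have hg : 0 < (α' u) ^ p + 1 := by positivity
    have h1 : HasDerivAt (fun y => (α' y) ^ p) (α'' u * p * (α' u) ^ (p - 1)) u :=
      (hd2 u hu).rpow_const (Or.inl ha'.ne')
    have h2 : HasDerivAt (fun y => (α' y) ^ p + 1) (α'' u * p * (α' u) ^ (p - 1)) u :=
      h1.add_const 1
    have h3 : HasDerivAt (fun y => ((α' y) ^ p + 1) ^ q)
        ((α'' u * p * (α' u) ^ (p - 1)) * q * ((α' u) ^ p + 1) ^ (q - 1)) u :=
      h2.rpow_const (Or.inl hg.ne')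
    have h4 := ((hd1 u hu).mul h3).add (((hd1 u hu).pow 2).const_mul H)
    have hzero : α' u * ((α' u) ^ p + 1) ^ q +
        α u * ((α'' u * p * (α' u) ^ (p - 1)) * q * ((α' u) ^ p + 1) ^ (q - 1)) +
        H * (↑2 * α u ^ (2 - 1) * α' u) = 0 := by
      have e1 : ((α' u) ^ p + 1) ^ (q - 1)
          = ((α' u) ^ p + 1) ^ (-(2 * M + 1) / (2 * M)) := by
        congr 1
        rw [hq]; field_simp; ring
      have e2 : (α' u) ^ (p - 1) = (α' u) ^ (-(2 * M - 2) / (2 * M - 1)) * α' u := by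
        rw [← Real.rpow_add_one ha'.ne']
        congr 1
        rw [hp]; field_simp; ring
      have hode' := hode u hu
      rw [e1, e2]
      rw [hp, hq]
      set X := ((α' u) ^ (2 * M / (2 * M - 1)) + 1) ^ (-(1:ℝ) / (2 * M)) with hX
      set Y := ((α' u) ^ (2 * M / (2 * M - 1)) + 1) ^ (-(2 * M + 1) / (2 * M)) with hY
      set Z := (α' u) ^ (-(2 * M - 2) / (2 * M - 1)) with hZ
      have key : (1 / (2 * M - 1)) * α u * Y * Z * α'' u - X = 2 * H * α u := hode'
      field_simp at key ⊢
      linear_combination (-(α' u)) * key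
    exact h4.congr_deriv hzero
  have hconv : Convex ℝ I := hI'.ordConnected.convex
  refine ⟨F u₀, fun u hu => ?_⟩
  have hfeq : F u = F u₀ := by
    apply hconv.is_const_of_fderivWithin_eq_zero
      (fun x hx => ((hFd x hx).differentiableAt).differentiableWithinAt) ?_ hu hu₀
    intro x hx
    rw [fderivWithin_of_isOpen hI hx]
    rw [(hFd x hx).hasFDerivAt.fderiv]
    ext; simp
  have : α u * ((α' u) ^ p + 1) ^ q + H * α u ^ 2 = F u₀ := hfeq
  linarith
end

section
/- Let m ≥ 2 be an integer, c₂ > 0, and let α : I → (c₂, ∞) satisfy α' ≠ 0 and (α')² = (1/c₂^{2(2m-1)})·(α^{2m} - c₂^{2m})^{(2m-1)/m}. Then at points where α' > 0, in the limit α → c₂⁺ one has (α')^{-(2m-2)/(2m-1)}·α'' → (2m-1)/c₂, and α'' → 0. -/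
open Filter

/-- C² regularity of the generalized catenoid at the neck: along the profile,
with α' = φ(α) and α'' = φ'(α)·φ(α), one has
(α')^{-(2m-2)/(2m-1)}·α'' → (2m-1)/c₂ and α'' → 0 as α → c₂⁺. -/
theorem catenoid_neck_regularity (m : ℕ) (hm : 2 ≤ m) (c₂ : ℝ) (hc : 0 < c₂)
    (φ : ℝ → ℝ)
    (hφ : ∀ a : ℝ, φ a = (1 / c₂ ^ (2 * m - 1)) *
      (a ^ (2 * m) - c₂ ^ (2 * m)) ^ ((2 * (m : ℝ) - 1) / (2 * m))) :
    Tendsto (fun a : ℝ => (φ a) ^ (-(2 * (m : ℝ) - 2) / (2 * m - 1)) * (deriv φ a * φ a))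
        (nhdsWithin c₂ (Set.Ioi c₂)) (nhds ((2 * (m : ℝ) - 1) / c₂)) ∧
    Tendsto (fun a : ℝ => deriv φ a * φ a)
        (nhdsWithin c₂ (Set.Ioi c₂)) (nhds 0) := by
  have hM2 : (2:ℝ) ≤ (m:ℝ) := by exact_mod_cast hm
  set M : ℝ := (m:ℝ) with hMdef
  have h2M : (0:ℝ) < 2*M := by linarith
  have h2M1 : (0:ℝ) < 2*M-1 := by linarith
  set p : ℝ := (2*M-1)/(2*M) with hp
  set q : ℝ := -(2*M-2)/(2*M-1) with hq
  set C : ℝ := 1 / c₂ ^ (2*m-1) with hC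
  set g : ℝ → ℝ := fun a => a ^ (2*m) - c₂ ^ (2*m) with hgdef
  have hCpos : 0 < C := by positivity
  have hφeq : φ = fun a => C * g a ^ p := funext hφ
  subst hφeq
  have hgpos : ∀ a ∈ Set.Ioi c₂, 0 < g a := by
    intro a ha
    have : c₂ ^ (2*m) < a ^ (2*m) := pow_lt_pow_left₀ ha hc.le (by omega)
    simpa [hgdef] using sub_pos.2 this
  have hcastm : ((2*m-1:ℕ):ℝ) = 2*M-1 := by
    have h1 : (1:ℕ) ≤ 2*m := by omega
    rw [Nat.cast_sub h1]; push_cast; ring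
  have hCr : C = c₂ ^ (-(2*M-1)) := by
    rw [hC, Real.rpow_neg hc.le, ← hcastm, Real.rpow_natCast, one_div]
  have hderiv : ∀ a ∈ Set.Ioi c₂, deriv (fun a => C * g a ^ p) a
      = C * ((↑(2*m) * a ^ (2*m-1)) * p * g a ^ (p-1)) := by
    intro a ha
    have h1 : HasDerivAt g ((↑(2*m) : ℝ) * a ^ (2*m-1)) a :=
      (hasDerivAt_pow (2*m) a).sub_const _
    exact ((h1.rpow_const (Or.inl (hgpos a ha).ne')).const_mul C).deriv
  -- closed form for α'' = deriv φ * φ on Ioi c₂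
  have key2 : ∀ a ∈ Set.Ioi c₂, deriv (fun a => C * g a ^ p) a * (C * g a ^ p)
      = (C * C * p * ((↑(2*m) : ℝ) * a ^ (2*m-1))) * g a ^ (2*p-1) := by
    intro a ha
    rw [hderiv a ha, show (2*p-1) = (p-1) + p by ring, Real.rpow_add (hgpos a ha)]
    ring
  -- closed form for the normalized quantity on Ioi c₂
  have key1 : ∀ a ∈ Set.Ioi c₂,
      (C * g a ^ p) ^ q * (deriv (fun a => C * g a ^ p) a * (C * g a ^ p))
      = c₂ ^ (-(2*M)) * p * ((↑(2*m) : ℝ) * a ^ (2*m-1)) := by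
    intro a ha
    have hx := hgpos a ha
    rw [key2 a ha, hCr,
      Real.mul_rpow (Real.rpow_nonneg hc.le _) (Real.rpow_nonneg hx.le _),
      ← Real.rpow_mul hc.le, ← Real.rpow_mul hx.le]
    have hMne : (M:ℝ) ≠ 0 := by linarith
    have e1 : c₂ ^ (-(2*M-1)*q) * (c₂ ^ (-(2*M-1)) * c₂ ^ (-(2*M-1))) = c₂ ^ (-(2*M)) := by
      rw [← Real.rpow_add hc, ← Real.rpow_add hc]
      congr 1
      rw [hq]; field_simp
      ring
    have e2 : g a ^ (p*q) * g a ^ (2*p-1) = 1 := by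
      rw [← Real.rpow_add hx, show p*q + (2*p-1) = 0 by
        rw [hp, hq]; field_simp; ring, Real.rpow_zero]
    calc c₂ ^ (-(2*M-1)*q) * g a ^ (p*q) *
          (c₂ ^ (-(2*M-1)) * c₂ ^ (-(2*M-1)) * p * ((↑(2*m) : ℝ) * a ^ (2*m-1)) *
            g a ^ (2*p-1))
        = (c₂ ^ (-(2*M-1)*q) * (c₂ ^ (-(2*M-1)) * c₂ ^ (-(2*M-1)))) *
            (g a ^ (p*q) * g a ^ (2*p-1)) * p * ((↑(2*m) : ℝ) * a ^ (2*m-1)) := by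
          ring
      _ = c₂ ^ (-(2*M)) * p * ((↑(2*m) : ℝ) * a ^ (2*m-1)) := by rw [e1, e2]; ring
  have hmemev : ∀ᶠ a in nhdsWithin c₂ (Set.Ioi c₂), a ∈ Set.Ioi c₂ :=
    eventually_mem_nhdsWithin
  have hcont : Tendsto (fun a : ℝ => ((↑(2*m):ℝ) * a ^ (2*m-1)))
      (nhdsWithin c₂ (Set.Ioi c₂)) (nhds ((↑(2*m):ℝ) * c₂ ^ (2*m-1))) :=
    ((continuous_const.mul (continuous_pow _)).tendsto c₂).mono_left nhdsWithin_le_nhds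
  constructor
  · apply Tendsto.congr' (hmemev.mono fun a ha => (key1 a ha).symm)
    have hval : c₂ ^ (-(2*M)) * p * ((↑(2*m):ℝ) * c₂ ^ (2*m-1)) = (2*M-1)/c₂ := by
      have h1 : ((2*m:ℕ):ℝ) = 2*M := by push_cast; ring
      have h2 : (c₂:ℝ) ^ (2*m-1) = c₂ ^ (2*M-1 : ℝ) := by
        rw [← hcastm, Real.rpow_natCast]
      have h3 : c₂ ^ (-(2*M)) * c₂ ^ (2*M-1 : ℝ) = c₂⁻¹ := by
        rw [← Real.rpow_add hc, show -(2*M) + (2*M-1) = -1 by ring, Real.rpow_neg_one]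
      have h4 : p * (2*M) = 2*M-1 := by rw [hp]; field_simp
      calc c₂ ^ (-(2*M)) * p * ((↑(2*m):ℝ) * c₂ ^ (2*m-1))
          = (c₂ ^ (-(2*M)) * c₂ ^ (2*M-1:ℝ)) * (p * (2*M)) := by rw [h1, h2]; ring
        _ = c₂⁻¹ * (2*M-1) := by rw [h3, h4]
        _ = (2*M-1)/c₂ := by rw [div_eq_mul_inv]; ring
    rw [← hval]
    exact (tendsto_const_nhds.mul tendsto_const_nhds).mul hcont
  · apply Tendsto.congr' (hmemev.mono fun a ha => (key2 a ha).symm)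
    have h2p1pos : (0:ℝ) < 2*p-1 := by
      rw [hp, show 2*((2*M-1)/(2*M)) - 1 = (2*M-2)/(2*M) by field_simp; ring]
      exact div_pos (by linarith) h2M
    have hgten : Tendsto g (nhdsWithin c₂ (Set.Ioi c₂)) (nhds 0) := by
      have h0 : Tendsto g (nhds c₂) (nhds (g c₂)) :=
        (((continuous_pow _).sub continuous_const).tendsto c₂)
      have : g c₂ = 0 := by simp [hgdef]
      rw [this] at h0
      exact h0.mono_left nhdsWithin_le_nhds
    have hrp := hgten.rpow_const (Or.inr h2p1pos.le)
    rw [Real.zero_rpow h2p1pos.ne'] at hrp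
    have hmul := ((tendsto_const_nhds.mul hcont).mul hrp :
      Tendsto (fun a : ℝ => (C*C*p) * ((↑(2*m):ℝ) * a ^ (2*m-1)) * g a ^ (2*p-1))
        (nhdsWithin c₂ (Set.Ioi c₂)) (nhds ((C*C*p) * ((↑(2*m):ℝ) * c₂ ^ (2*m-1)) * 0)))
    simp only [mul_zero] at hmul
    exact hmul.congr (fun a => by ring)
end
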